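/- arXiv:2205.06375 — 2 statements merged into one kernel-verified Lean document; each statement's English description precedes it below -/
import Mathlib

section
/- For every nonempty area sequence w, the number of bounces of w equals the maximum value of ψ(w); that is, |bounces(w)| = max(ψ(w)). -/
/-- The `i`-th letter of the word `w` (`1`-indexed, as in the paper);
defaults to `0` out of range. -/
def get1 (w : List ℕ) (i : ℕ) : ℕ := w.getD (i - 1) 0

/-- `w` is the area sequence of a Dyck path: the first letter is `0` and each
letter exceeds the previous one by at most one. -/
def IsAreaSeq (w : List ℕ) : Prop :=
  (w ≠ [] → get1 w 1 = 0) ∧ ∀ i, 1 ≤ i → i < w.length → get1 w (i + 1) ≤ get1 w i + 1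

/-- Insertion at position `i` (for `0 ≤ i ≤ n`): `ins w 0` prepends a `0`, and
for `1 ≤ i ≤ n`, `ins w i` inserts the letter `w_i + 1` just after position `i`. -/
def ins (w : List ℕ) (i : ℕ) : List ℕ :=
  w.take i ++ (if i = 0 then 0 else get1 w i + 1) :: w.drop i

/-- The area statistic: the sum of the letters. -/
def area (w : List ℕ) : ℕ := w.sum

/-- The dinv statistic: `dinv w = Σ_i d_i` where `d_i` is the number of `j > i`
with `w_j = w_i` or `w_j = w_i - 1`. -/
def dinv (w : List ℕ) : ℕ :=
  ∑ i ∈ Finset.Icc 1 w.length,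
    ((Finset.Ioc i w.length).filter
      (fun j => get1 w j = get1 w i ∨ get1 w j + 1 = get1 w i)).card

/-- The maximal value of a word (`0` for the empty word). -/
def maxVal (w : List ℕ) : ℕ := w.foldr max 0

/-- Positions of the letters of maximal value `m`. -/
def Maxb (w : List ℕ) : Finset ℕ :=
  (Finset.Icc 1 w.length).filter (fun i => get1 w i = maxVal w)

/-- Positions `i` with `w_i = m - 1` such that all letters after position `i`
are `< m`. -/
def Maxa (w : List ℕ) : Finset ℕ :=
  (Finset.Icc 1 w.length).filter (fun i =>
    get1 w i + 1 = maxVal w ∧ ∀ j ∈ Finset.Ioc i w.length, get1 w j < maxVal w)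

/-- The position of the leftmost letter equal to the maximal value `m` in the
rightmost block of consecutive letters equal to `m`. -/
def i0 (w : List ℕ) : ℕ :=
  ((Finset.Icc 1 w.length).filter (fun i =>
    get1 w i = maxVal w ∧ (i = 1 ∨ get1 w (i - 1) ≠ maxVal w))).sup id

/-- The admissible insertion positions of `w`, listed in admissible order:
the elements of `Maxb w` in decreasing order, then the elements of `Maxa w`
in decreasing order, then `i0 w - 1`.  The empty word has the single
admissible insertion position `0`. -/
def admissible (w : List ℕ) : List ℕ :=
  if w = [] then [0]
  else ((Maxb w).sort (· ≤ ·)).reverse ++ ((Maxa w).sort (· ≤ ·)).reverse ++ [i0 w - 1]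

/-- Auxiliary version of the map `ψ`, reading the reversed word. -/
def psiRev : List ℕ → List ℕ
  | [] => []
  | a :: u => ins (psiRev u) ((admissible (psiRev u)).getD a 0)

/-- The map `ψ`: `ψ(ε) = ε` and `ψ(u a) = ins_{c_a}(ψ(u))` where
`c_0, c_1, …, c_k` are the admissible insertion positions of `ψ(u)` in
admissible order. -/
def psi (w : List ℕ) : List ℕ := psiRev w.reverse

/-- The bounce sequence: `b_1 = 0`, and `b_i = b_{i-1} + 1` if
`b_{i-1} + 1 ≤ w_i`, otherwise `b_i = 0`. -/
def bseq (w : List ℕ) : ℕ → ℕ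
  | 0 => 0
  | 1 => 0
  | (i + 2) => if bseq w (i + 1) + 1 ≤ get1 w (i + 2) then bseq w (i + 1) + 1 else 0

/-- The bounces of `w`: positions `1 < i ≤ n` with `b_i = 0`. -/
def bounces (w : List ℕ) : Finset ℕ :=
  (Finset.Icc 2 w.length).filter (fun i => bseq w i = 0)

/-- The bounce statistic: the sum of the reversed positions `n - i + 1` of the
bounces of `w`. -/
def bounce (w : List ℕ) : ℕ := ∑ i ∈ bounces w, (w.length - i + 1)

/-! Let `u` be a nonempty area sequence with last letter `u_n` and last bounce-sequence value `b`,
and let `m` be the maximum of `ψ u`. Appending a letter `a ≤ u_n + 1` to `u` acts on `ψ u` as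
follows: if `a ≤ b`, the new letter `m + 1` is inserted after a maximal letter, so the maximum
grows by one exactly when `u ++ [a]` gets a new bounce (its last bounce-sequence value is `0`);
if `a > b`, the new letter is `m`, the maximum stays and the bounce sequence goes on to `b + 1`.
Choosing the `a`-th admissible position is what maintains `|Maxb (ψ u)| = b + 1` and
`|Maxa (ψ u)| = u_n - b`, and these counts decide which case the next letter falls into. -/

def insLetter (w : List ℕ) (i : ℕ) : ℕ := if i = 0 then 0 else get1 w i + 1

lemma ins_eq (w : List ℕ) (i : ℕ) : ins w i = w.take i ++ insLetter w i :: w.drop i := rfl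

section Words

variable {w : List ℕ} {i j : ℕ}

lemma length_ins (hi : i ≤ w.length) : (ins w i).length = w.length + 1 := by
  simp [ins]
  omega

lemma get1_ins_of_le (hi : i ≤ w.length) (hj : 1 ≤ j) (hji : j ≤ i) :
    get1 (ins w i) j = get1 w j := by
  unfold ins get1
  rw [List.getD_append _ _ _ _ (by simp; omega)]
  simp [List.getD_eq_getElem?_getD, show j - 1 < i by omega]

lemma get1_ins_succ (hi : i ≤ w.length) : get1 (ins w i) (i + 1) = insLetter w i := by
  rw [ins_eq, get1, List.getD_append_right _ _ _ _ (by simp)]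
  simp [Nat.min_eq_left hi]

lemma get1_ins_of_lt (hi : i ≤ w.length) (hij : i + 2 ≤ j) :
    get1 (ins w i) j = get1 w (j - 1) := by
  unfold ins get1
  rw [List.getD_append_right _ _ _ _ (by simp; omega), List.length_take, Nat.min_eq_left hi,
    show j - 1 - i = (j - 2 - i) + 1 by omega, List.getD_cons_succ, List.getD_eq_getElem?_getD,
    List.getD_eq_getElem?_getD, List.getElem?_drop, show i + (j - 2 - i) = j - 1 - 1 by omega]

lemma get1_le_maxVal (w : List ℕ) (j : ℕ) : get1 w j ≤ maxVal w := by
  unfold get1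
  rcases lt_or_ge (j - 1) w.length with h | h
  · rw [List.getD_eq_getElem _ _ h]
    exact List.le_max_of_le' 0 (List.getElem_mem h) le_rfl
  · rw [List.getD_eq_default _ _ h]
    exact Nat.zero_le _

lemma maxVal_ins (w : List ℕ) (i : ℕ) : maxVal (ins w i) = max (insLetter w i) (maxVal w) := by
  unfold maxVal
  rw [ins_eq, List.perm_middle.foldr_eq, List.foldr_cons, List.take_append_drop]

lemma isAreaSeq_ins (hw : IsAreaSeq w) (hi : i ≤ w.length) : IsAreaSeq (ins w i) := by
  have hfirst : 1 ≤ w.length → get1 w 1 = 0 := fun h => hw.1 (List.ne_nil_of_length_pos h)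
  refine ⟨fun _ => ?_, fun j hj hjn => ?_⟩
  · rcases Nat.eq_zero_or_pos i with rfl | hi0
    · simpa [insLetter] using get1_ins_succ hi
    · rw [get1_ins_of_le hi le_rfl hi0]
      exact hfirst (by omega)
  rw [length_ins hi] at hjn
  obtain hji | rfl | rfl | hij : j < i ∨ j = i ∨ j = i + 1 ∨ i + 2 ≤ j := by omega
  · rw [get1_ins_of_le hi (by omega) hji, get1_ins_of_le hi hj hji.le]
    exact hw.2 j hj (by omega)
  · rw [get1_ins_succ hi, get1_ins_of_le hi hj le_rfl, insLetter, if_neg (by omega)]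
  · rw [get1_ins_of_lt hi le_rfl, get1_ins_succ hi, show i + 2 - 1 = i + 1 by rfl, insLetter]
    split_ifs with hi0
    · subst hi0
      simp [hfirst (by omega)]
    · have := hw.2 i (by omega) (by omega)
      omega
  · rw [get1_ins_of_lt hi (by omega), get1_ins_of_lt hi hij,
      show j + 1 - 1 = j - 1 + 1 by omega]
    exact hw.2 (j - 1) (by omega) (by omega)

end Words

section Append

variable {u : List ℕ} {a : ℕ}

lemma get1_append_of_le (t : List ℕ) {j : ℕ} (hj : 1 ≤ j) (hju : j ≤ u.length) :
    get1 (u ++ t) j = get1 u j :=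
  List.getD_append _ _ _ _ (by omega)

lemma get1_append_singleton_length (u : List ℕ) (a : ℕ) : get1 (u ++ [a]) (u.length + 1) = a := by
  simp [get1]

lemma IsAreaSeq.of_append_singleton (hw : IsAreaSeq (u ++ [a])) : IsAreaSeq u := by
  refine ⟨fun hu => ?_, fun j hj hju => ?_⟩
  · rw [← get1_append_of_le [a] le_rfl (List.length_pos_iff.2 hu)]
    exact hw.1 (by simp)
  · rw [← get1_append_of_le [a] (by omega) hju, ← get1_append_of_le [a] hj hju.le]
    exact hw.2 j hj (by simp; omega)

lemma IsAreaSeq.le_succ_of_append_singleton (hw : IsAreaSeq (u ++ [a])) (hu : u ≠ []) :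
    a ≤ get1 u u.length + 1 := by
  have hlen := List.length_pos_iff.2 hu
  have := hw.2 u.length hlen (by simp)
  rwa [get1_append_singleton_length, get1_append_of_le [a] hlen le_rfl] at this

lemma bseq_le (w : List ℕ) : ∀ j, bseq w j ≤ get1 w j
  | 0 | 1 => Nat.zero_le _
  | j + 2 => by
    rw [bseq]
    split_ifs <;> omega

lemma bseq_append (t : List ℕ) : ∀ {j}, j ≤ u.length → bseq (u ++ t) j = bseq u j
  | 0, _ | 1, _ => rfl
  | j + 2, hj => by
    rw [bseq, bseq, bseq_append t (by omega), get1_append_of_le t (by omega) hj]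

lemma bseq_append_singleton (hu : u ≠ []) :
    bseq (u ++ [a]) (u.length + 1) =
      if bseq u u.length + 1 ≤ a then bseq u u.length + 1 else 0 := by
  obtain ⟨k, hk⟩ : ∃ k, u.length = k + 1 := Nat.exists_eq_succ_of_ne_zero (by simpa using hu)
  have hlast := get1_append_singleton_length u a
  rw [hk] at hlast ⊢
  rw [bseq, bseq_append [a] hk.ge, hlast]

lemma card_bounces_append_singleton (hu : u ≠ []) :
    (bounces (u ++ [a])).card =
      (bounces u).card + if bseq (u ++ [a]) (u.length + 1) = 0 then 1 else 0 := by
  have hlen := List.length_pos_iff.2 hu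
  unfold bounces
  rw [List.length_append, List.length_singleton, Finset.card_filter, Finset.card_filter,
    Finset.sum_Icc_succ_top (by omega)]
  congr 1
  exact Finset.sum_congr rfl fun j hj => by rw [bseq_append [a] (Finset.mem_Icc.1 hj).2]

end Append

section Maximal

variable {w : List ℕ} {i j : ℕ}

lemma mem_Maxb : j ∈ Maxb w ↔ 1 ≤ j ∧ j ≤ w.length ∧ get1 w j = maxVal w := by
  simp only [Maxb, Finset.mem_filter, Finset.mem_Icc, and_assoc]

lemma mem_Maxa :
    j ∈ Maxa w ↔ 1 ≤ j ∧ j ≤ w.length ∧ get1 w j + 1 = maxVal w ∧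
      ∀ k, j < k → k ≤ w.length → get1 w k < maxVal w := by
  simp only [Maxa, Finset.mem_filter, Finset.mem_Icc, Finset.mem_Ioc, and_imp, and_assoc]

lemma Maxb_nonempty (hw : w ≠ []) : (Maxb w).Nonempty := by
  have hmem : maxVal w ∈ w := List.maximum_mem (List.foldr_max_of_ne_nil hw).symm
  obtain ⟨k, hk, hkw⟩ := List.mem_iff_getElem.1 hmem
  exact ⟨k + 1, mem_Maxb.2 ⟨by omega, hk, by rw [get1, Nat.add_sub_cancel, List.getD_eq_getElem _ _ hk, hkw]⟩⟩

lemma maxVal_ins_of_mem_Maxb (hi : i ∈ Maxb w) : maxVal (ins w i) = maxVal w + 1 := by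
  obtain ⟨hi1, -, him⟩ := mem_Maxb.1 hi
  rw [maxVal_ins, insLetter, if_neg (by omega), him]
  omega

lemma Maxb_ins_of_mem_Maxb (hi : i ∈ Maxb w) : Maxb (ins w i) = {i + 1} := by
  obtain ⟨hi1, hin, him⟩ := mem_Maxb.1 hi
  ext j
  rw [mem_Maxb, maxVal_ins_of_mem_Maxb hi, length_ins hin, Finset.mem_singleton]
  refine ⟨fun ⟨hj, hjn, hjm⟩ => ?_, ?_⟩
  · obtain hji | rfl | hij : j < i + 1 ∨ j = i + 1 ∨ i + 2 ≤ j := by omega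
    · have := get1_le_maxVal w j
      rw [get1_ins_of_le hin hj (by omega)] at hjm
      omega
    · rfl
    · have := get1_le_maxVal w (j - 1)
      rw [get1_ins_of_lt hin hij] at hjm
      omega
  · rintro rfl
    exact ⟨by omega, by omega, by rw [get1_ins_succ hin, insLetter, if_neg (by omega), him]⟩

lemma Maxa_ins_of_mem_Maxb (hi : i ∈ Maxb w) :
    Maxa (ins w i) = ((Maxb w).filter (i < ·)).image (· + 1) := by
  obtain ⟨hi1, hin, him⟩ := mem_Maxb.1 hi
  have hmid : get1 (ins w i) (i + 1) = maxVal w + 1 := by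
    rw [get1_ins_succ hin, insLetter, if_neg (by omega), him]
  ext j
  simp only [mem_Maxa, maxVal_ins_of_mem_Maxb hi, length_ins hin, Finset.mem_image,
    Finset.mem_filter, mem_Maxb]
  constructor
  · rintro ⟨hj, hjn, hjm, hafter⟩
    have hij : i + 2 ≤ j := by
      by_contra
      obtain hji | rfl : j < i + 1 ∨ j = i + 1 := by omega
      · have := hafter (i + 1) hji (by omega)
        omega
      · omega
    rw [get1_ins_of_lt hin hij] at hjm
    exact ⟨j - 1, ⟨⟨by omega, by omega, by omega⟩, by omega⟩, by omega⟩
  · rintro ⟨y, ⟨⟨hy1, hyn, hym⟩, hiy⟩, rfl⟩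
    refine ⟨by omega, by omega, by rw [get1_ins_of_lt hin (by omega), Nat.add_sub_cancel, hym],
      fun k hk hkn => ?_⟩
    have := get1_le_maxVal w (k - 1)
    rw [get1_ins_of_lt hin (by omega)]
    omega

lemma maxVal_ins_of_insLetter_eq (h : insLetter w i = maxVal w) : maxVal (ins w i) = maxVal w := by
  rw [maxVal_ins, h, max_self]

lemma Maxb_ins_of_insLetter_eq (hin : i ≤ w.length) (h : insLetter w i = maxVal w) :
    Maxb (ins w i) = insert (i + 1) ((Maxb w).image fun y => if y ≤ i then y else y + 1) := by
  ext j
  simp only [mem_Maxb, maxVal_ins_of_insLetter_eq h, length_ins hin, Finset.mem_insert,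
    Finset.mem_image]
  constructor
  · rintro ⟨hj, hjn, hjm⟩
    obtain hji | rfl | hij : j < i + 1 ∨ j = i + 1 ∨ i + 2 ≤ j := by omega
    · rw [get1_ins_of_le hin hj (by omega)] at hjm
      exact Or.inr ⟨j, ⟨hj, by omega, hjm⟩, if_pos (by omega)⟩
    · exact Or.inl rfl
    · rw [get1_ins_of_lt hin hij] at hjm
      exact Or.inr ⟨j - 1, ⟨by omega, by omega, hjm⟩, by rw [if_neg (by omega)]; omega⟩
  · rintro (rfl | ⟨y, ⟨hy1, hyn, hym⟩, rfl⟩)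
    · exact ⟨by omega, by omega, by rw [get1_ins_succ hin, h]⟩
    · split_ifs with hyi
      · exact ⟨hy1, by omega, by rw [get1_ins_of_le hin hy1 hyi, hym]⟩
      · exact ⟨by omega, by omega, by rw [get1_ins_of_lt hin (by omega), Nat.add_sub_cancel, hym]⟩

lemma card_Maxb_ins_of_insLetter_eq (hin : i ≤ w.length) (h : insLetter w i = maxVal w) :
    (Maxb (ins w i)).card = (Maxb w).card + 1 := by
  have hinj : Function.Injective fun y => if y ≤ i then y else y + 1 := by
    intro x y hxy
    dsimp only at hxy
    split_ifs at hxy <;> omega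
  rw [Maxb_ins_of_insLetter_eq hin h, Finset.card_insert_of_notMem, Finset.card_image_of_injective _ hinj]
  simp only [Finset.mem_image, not_exists, not_and]
  intro y _
  split_ifs <;> omega

lemma Maxa_ins_of_insLetter_eq (hin : i ≤ w.length) (h : insLetter w i = maxVal w) :
    Maxa (ins w i) = ((Maxa w).filter (i < ·)).image (· + 1) := by
  have hmid : get1 (ins w i) (i + 1) = maxVal w := by rw [get1_ins_succ hin, h]
  ext j
  simp only [mem_Maxa, maxVal_ins_of_insLetter_eq h, length_ins hin, Finset.mem_image,
    Finset.mem_filter]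
  constructor
  · rintro ⟨hj, hjn, hjm, hafter⟩
    have hij : i + 2 ≤ j := by
      by_contra
      obtain hji | rfl : j < i + 1 ∨ j = i + 1 := by omega
      · have := hafter (i + 1) hji (by omega)
        omega
      · omega
    rw [get1_ins_of_lt hin hij] at hjm
    refine ⟨j - 1, ⟨⟨by omega, by omega, hjm, fun k hk hkn => ?_⟩, by omega⟩, by omega⟩
    have := hafter (k + 1) (by omega) (by omega)
    rwa [get1_ins_of_lt hin (by omega), Nat.add_sub_cancel] at this
  · rintro ⟨y, ⟨⟨hy1, hyn, hym, hafter⟩, hiy⟩, rfl⟩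
    refine ⟨by omega, by omega, by rw [get1_ins_of_lt hin (by omega), Nat.add_sub_cancel, hym],
      fun k hk hkn => ?_⟩
    rw [get1_ins_of_lt hin (by omega)]
    exact hafter (k - 1) (by omega) (by omega)

end Maximal

section RightmostBlock

variable {w : List ℕ}

lemma i0_spec (hw : w ≠ []) :
    1 ≤ i0 w ∧ i0 w ≤ w.length ∧ get1 w (i0 w) = maxVal w ∧
      (i0 w = 1 ∨ get1 w (i0 w - 1) ≠ maxVal w) := by
  set S := (Finset.Icc 1 w.length).filter fun i =>
    get1 w i = maxVal w ∧ (i = 1 ∨ get1 w (i - 1) ≠ maxVal w)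
  have hS : S.Nonempty := by
    set j := (Maxb w).min' (Maxb_nonempty hw)
    obtain ⟨hj1, hjn, hjm⟩ := mem_Maxb.1 ((Maxb w).min'_mem (Maxb_nonempty hw))
    refine ⟨j, Finset.mem_filter.2 ⟨Finset.mem_Icc.2 ⟨hj1, hjn⟩, hjm, ?_⟩⟩
    refine or_iff_not_imp_left.2 fun hj => fun hprev => ?_
    have := (Maxb w).min'_le (j - 1) (mem_Maxb.2 ⟨by omega, by omega, hprev⟩)
    omega
  obtain ⟨i, hi, hsup⟩ := S.exists_mem_eq_sup hS id
  have hi0 : i0 w = i := hsup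
  obtain ⟨hin, him, hiblock⟩ := Finset.mem_filter.1 hi
  rw [hi0]
  exact ⟨(Finset.mem_Icc.1 hin).1, (Finset.mem_Icc.1 hin).2, him, hiblock⟩

lemma insLetter_i0_sub_one (hw : IsAreaSeq w) (hne : w ≠ []) :
    insLetter w (i0 w - 1) = maxVal w := by
  obtain ⟨h1, hn, hm, hblock⟩ := i0_spec hne
  rcases eq_or_ne (i0 w) 1 with h | h
  · rw [h, ← hm, h, hw.1 hne]
    rfl
  · have hprev := hblock.resolve_left h
    have hstep := hw.2 (i0 w - 1) (by omega) (by omega)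
    have := get1_le_maxVal w (i0 w - 1)
    rw [Nat.sub_add_cancel h1] at hstep
    rw [insLetter, if_neg (by omega)]
    omega

lemma i0_lt_of_mem_Maxa (hne : w ≠ []) {j : ℕ} (hj : j ∈ Maxa w) : i0 w < j := by
  obtain ⟨-, hn, hm, -⟩ := i0_spec hne
  obtain ⟨-, -, hjm, hafter⟩ := mem_Maxa.1 hj
  by_contra
  obtain h | rfl : j < i0 w ∨ j = i0 w := by omega
  · have := hafter (i0 w) h hn
    omega
  · omega

end RightmostBlock

section SortedFinset

variable {α : Type*} [LinearOrder α] (s : Finset α) (d : α) {a : ℕ}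

lemma getD_reverse_sort_mem (ha : a < s.card) : (s.sort (· ≤ ·)).reverse.getD a d ∈ s := by
  rw [List.getD_eq_getElem _ _ (by simpa using ha)]
  exact (Finset.mem_sort _).1 (List.mem_reverse.1 (List.getElem_mem _))

lemma card_filter_getD_reverse_sort_lt (ha : a < s.card) :
    (s.filter ((s.sort (· ≤ ·)).reverse.getD a d < ·)).card = a := by
  set e := s.orderEmbOfFin rfl
  let k : Fin s.card := ⟨s.card - 1 - a, by omega⟩
  have hk : (s.sort (· ≤ ·)).reverse.getD a d = e k := by
    rw [List.getD_eq_getElem _ _ (by simpa using ha), List.getElem_reverse,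
      Finset.orderEmbOfFin_apply]
    simp [k]
  have himage : s.filter (e k < ·) = (Finset.Ioi k).map e.toEmbedding := by
    ext y
    simp only [Finset.mem_filter, Finset.mem_map, Finset.mem_Ioi]
    constructor
    · rintro ⟨hy, hky⟩
      obtain ⟨j, rfl⟩ : y ∈ Set.range e := by rwa [Finset.range_orderEmbOfFin]
      exact ⟨j, e.lt_iff_lt.1 hky, rfl⟩
    · rintro ⟨j, hkj, rfl⟩
      exact ⟨s.orderEmbOfFin_mem rfl j, e.lt_iff_lt.2 hkj⟩
  rw [hk, himage, Finset.card_map, Fin.card_Ioi]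
  simp only [k]
  omega

end SortedFinset

section Admissible

variable {w : List ℕ} {a : ℕ}

lemma admissible_getD_of_lt_card_Maxb (hw : w ≠ []) (ha : a < (Maxb w).card) :
    (admissible w).getD a 0 = ((Maxb w).sort (· ≤ ·)).reverse.getD a 0 := by
  rw [admissible, if_neg hw, List.append_assoc, List.getD_append _ _ _ _ (by simpa using ha)]

lemma admissible_getD_of_lt_card_Maxa (hw : w ≠ []) (ha : (Maxb w).card ≤ a)
    (ha' : a - (Maxb w).card < (Maxa w).card) :
    (admissible w).getD a 0 = ((Maxa w).sort (· ≤ ·)).reverse.getD (a - (Maxb w).card) 0 := by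
  rw [admissible, if_neg hw, List.append_assoc, List.getD_append_right _ _ _ _ (by simpa using ha),
    List.getD_append _ _ _ _ (by simpa using ha'), List.length_reverse, Finset.length_sort]

lemma admissible_getD_card_add_card (hw : w ≠ []) :
    (admissible w).getD ((Maxb w).card + (Maxa w).card) 0 = i0 w - 1 := by
  rw [admissible, if_neg hw, List.getD_append_right _ _ _ _ (by simp)]
  simp

end Admissible

lemma psi_append_singleton (u : List ℕ) (a : ℕ) :
    psi (u ++ [a]) = ins (psi u) ((admissible (psi u)).getD a 0) := by
  rw [psi, List.reverse_append]
  rfl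

lemma psi_singleton_zero : psi [0] = [0] := rfl

lemma psi_ne_nil {u : List ℕ} (hu : u ≠ []) : psi u ≠ [] := by
  obtain ⟨v, a, rfl⟩ := (List.eq_nil_or_concat u).resolve_left hu
  rw [List.concat_eq_append, psi_append_singleton, ins_eq]
  simp

structure PsiInvariant (u : List ℕ) : Prop where
  isAreaSeq : IsAreaSeq (psi u)
  card_Maxb : (Maxb (psi u)).card = bseq u u.length + 1
  card_Maxa : (Maxa (psi u)).card = get1 u u.length - bseq u u.length
  card_bounces : (bounces u).card = maxVal (psi u)

lemma psiInvariant_singleton_zero : PsiInvariant [0] where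
  isAreaSeq := by rw [psi_singleton_zero]; exact ⟨fun _ => rfl, fun i hi hin => by simp at hin; omega⟩
  card_Maxb := by rw [psi_singleton_zero]; rfl
  card_Maxa := by rw [psi_singleton_zero]; rfl
  card_bounces := by rw [psi_singleton_zero]; rfl

namespace PsiInvariant

variable {u : List ℕ} {a : ℕ}

lemma append_of_le_bseq (h : PsiInvariant u) (hu : u ≠ []) (ha : a ≤ bseq u u.length) :
    PsiInvariant (u ++ [a]) := by
  have hlt : a < (Maxb (psi u)).card := by rw [h.card_Maxb]; omega
  set c := ((Maxb (psi u)).sort (· ≤ ·)).reverse.getD a 0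
  have hc : c ∈ Maxb (psi u) := getD_reverse_sort_mem _ _ hlt
  have hpsi : psi (u ++ [a]) = ins (psi u) c := by
    rw [psi_append_singleton, admissible_getD_of_lt_card_Maxb (psi_ne_nil hu) hlt]
  have hb : bseq (u ++ [a]) (u.length + 1) = 0 := by
    rw [bseq_append_singleton hu, if_neg (by omega)]
  have hlen : (u ++ [a]).length = u.length + 1 := by simp
  refine ⟨hpsi ▸ isAreaSeq_ins h.isAreaSeq (mem_Maxb.1 hc).2.1, ?_, ?_, ?_⟩
  · rw [hpsi, Maxb_ins_of_mem_Maxb hc, hlen, hb, Finset.card_singleton]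
  · rw [hpsi, Maxa_ins_of_mem_Maxb hc, Finset.card_image_of_injective _ (add_left_injective 1),
      card_filter_getD_reverse_sort_lt _ _ hlt, hlen, hb, get1_append_singleton_length,
      Nat.sub_zero]
  · rw [card_bounces_append_singleton hu, hb, if_pos rfl, hpsi, maxVal_ins_of_mem_Maxb hc,
      h.card_bounces]

lemma append_of_insLetter_eq (h : PsiInvariant u) (hu : u ≠ []) (hba : bseq u u.length < a)
    {c : ℕ} (hpsi : psi (u ++ [a]) = ins (psi u) c) (hc : c ≤ (psi u).length)
    (hcm : insLetter (psi u) c = maxVal (psi u))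
    (hMaxa : ((Maxa (psi u)).filter (c < ·)).card = a - (bseq u u.length + 1)) :
    PsiInvariant (u ++ [a]) := by
  have hb : bseq (u ++ [a]) (u.length + 1) = bseq u u.length + 1 := by
    rw [bseq_append_singleton hu, if_pos hba.nat_succ_le]
  have hlen : (u ++ [a]).length = u.length + 1 := by simp
  refine ⟨hpsi ▸ isAreaSeq_ins h.isAreaSeq hc, ?_, ?_, ?_⟩
  · rw [hpsi, card_Maxb_ins_of_insLetter_eq hc hcm, h.card_Maxb, hlen, hb]
  · rw [hpsi, Maxa_ins_of_insLetter_eq hc hcm,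
      Finset.card_image_of_injective _ (add_left_injective 1), hMaxa, hlen, hb,
      get1_append_singleton_length]
  · rw [card_bounces_append_singleton hu, hb, if_neg (by omega), hpsi,
      maxVal_ins_of_insLetter_eq hcm, h.card_bounces, add_zero]

lemma append_of_bseq_lt_of_le (h : PsiInvariant u) (hu : u ≠ []) (hba : bseq u u.length < a)
    (ha : a ≤ get1 u u.length) : PsiInvariant (u ++ [a]) := by
  have hle : (Maxb (psi u)).card ≤ a := by rw [h.card_Maxb]; omega
  have hlt : a - (Maxb (psi u)).card < (Maxa (psi u)).card := by
    rw [h.card_Maxb, h.card_Maxa]; omega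
  set c := ((Maxa (psi u)).sort (· ≤ ·)).reverse.getD (a - (Maxb (psi u)).card) 0
  obtain ⟨hc1, hcn, hcm, -⟩ := mem_Maxa.1 (getD_reverse_sort_mem _ _ hlt)
  refine h.append_of_insLetter_eq hu hba (c := c) ?_ hcn ?_ ?_
  · rw [psi_append_singleton, admissible_getD_of_lt_card_Maxa (psi_ne_nil hu) hle hlt]
  · rw [insLetter, if_neg (by omega), hcm]
  · rw [card_filter_getD_reverse_sort_lt _ _ hlt, h.card_Maxb]

lemma append_of_eq_succ (h : PsiInvariant u) (hu : u ≠ []) (ha : a = get1 u u.length + 1) :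
    PsiInvariant (u ++ [a]) := by
  have hv := psi_ne_nil hu
  have hbl := bseq_le u u.length
  refine h.append_of_insLetter_eq hu (by omega) (c := i0 (psi u) - 1) ?_
    (by have := (i0_spec hv).2.1; omega) (insLetter_i0_sub_one h.isAreaSeq hv) ?_
  · rw [psi_append_singleton, ← admissible_getD_card_add_card hv, h.card_Maxb, h.card_Maxa, ha]
    congr 2
    omega
  · rw [Finset.filter_true_of_mem fun j hj => by have := i0_lt_of_mem_Maxa hv hj; omega,
      h.card_Maxa]
    omega

end PsiInvariant

theorem psiInvariant {w : List ℕ} (hw : IsAreaSeq w) (hne : w ≠ []) : PsiInvariant w := by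
  induction w using List.reverseRecOn with
  | nil => exact absurd rfl hne
  | append_singleton u a ih =>
    rcases eq_or_ne u [] with rfl | hu
    · obtain rfl : a = 0 := hw.1 hne
      exact psiInvariant_singleton_zero
    have h := ih hw.of_append_singleton hu
    have ha := hw.le_succ_of_append_singleton hu
    rcases le_or_gt a (bseq u u.length) with hab | hba
    · exact h.append_of_le_bseq hu hab
    rcases Nat.lt_or_eq_of_le ha with ha | ha
    · exact h.append_of_bseq_lt_of_le hu hba (Nat.le_of_lt_succ ha)
    · exact h.append_of_eq_succ hu ha

/-- For a nonempty area sequence `w`, the number of bounces of `w` equals the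
maximal value of `ψ w`. -/
theorem card_bounces_eq_maxVal_psi (w : List ℕ) (hw : IsAreaSeq w) (hne : w ≠ []) :
    (bounces w).card = maxVal (psi w) :=
  (psiInvariant hw hne).card_bounces
end

section
/- For all natural numbers n and q, the number of area sequences of size n with area equal to q is equal to the number of area sequences of size n with dinv equal to q. -/
/-!
Both statistics are generated by the same labelled generating tree. A nonempty area sequence
`v` has a parent one letter shorter: for area, `v` without its last letter; for dinv, `v`
without the last occurrence of its largest letter. A sequence `u` with label `c`
(`maxNext u`, resp. `dinvCap u`) has exactly `c + 1` children; they carry the labels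
`1, …, c + 1`, and a child with label `k + 1` exceeds `u` by `k` in the statistic. By induction
on the size, the multisets of pairs (statistic, label) over the area sequences of size `n`
coincide, and forgetting the labels gives the theorem.
-/

def childLabels (x : ℕ × ℕ) : Multiset (ℕ × ℕ) :=
  (Multiset.range (x.2 + 1)).map fun k => (x.1 + k, k + 1)

lemma Finset.val_eq_bind_of_parent {α : Type*} {S T : Finset α} (ch : α → Multiset α)
    (parent : α → α) (hnodup : ∀ u ∈ S, (ch u).Nodup)
    (hparent : ∀ u ∈ S, ∀ v ∈ ch u, parent v = u) (hmem : ∀ v, v ∈ T ↔ ∃ u ∈ S, v ∈ ch u) :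
    T.val = S.val.bind ch := by
  have hdisj : S.val.Pairwise fun u u' => Disjoint (ch u) (ch u') :=
    S.nodup.pairwise fun u hu u' hu' hne => Multiset.disjoint_left.2 fun hv hv' =>
      hne ((hparent u hu _ hv).symm.trans (hparent u' hu' _ hv'))
  refine (Multiset.Nodup.ext T.nodup (Multiset.nodup_bind.2 ⟨hnodup, hdisj⟩)).2 fun v => ?_
  simp [hmem]

lemma Finset.map_val_eq_bind_childLabels {α : Type*} {S T : Finset α} (ch : α → Multiset α)
    (parent : α → α) (stat cap : α → ℕ)
    (hparent : ∀ u ∈ S, ∀ v ∈ ch u, parent v = u) (hmem : ∀ v, v ∈ T ↔ ∃ u ∈ S, v ∈ ch u)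
    (hcap : ∀ u ∈ S, (ch u).map cap = (Multiset.range (cap u + 1)).map (· + 1))
    (hstat : ∀ u ∈ S, ∀ v ∈ ch u, stat v + 1 = stat u + cap v) :
    T.val.map (fun v => (stat v, cap v)) =
      (S.val.map fun u => (stat u, cap u)).bind childLabels := by
  have hnodup : ∀ u ∈ S, (ch u).Nodup := fun u hu => Multiset.Nodup.of_map cap <| by
    rw [hcap u hu]
    exact (Multiset.nodup_range _).map (add_left_injective 1)
  rw [Finset.val_eq_bind_of_parent ch parent hnodup hparent hmem, Multiset.map_bind,
    Multiset.bind_map]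
  refine Multiset.bind_congr fun u hu => ?_
  calc (ch u).map (fun v => (stat v, cap v))
      = ((ch u).map cap).map (fun c => (stat u + c - 1, c)) := by
        rw [Multiset.map_map]
        refine Multiset.map_congr rfl fun v hv => ?_
        have := hstat u hu v hv
        simp only [Function.comp_apply, Prod.mk.injEq, and_true]
        omega
    _ = childLabels (stat u, cap u) := by
        rw [hcap u hu, Multiset.map_map, childLabels]
        rfl

lemma List.exists_eq_append_cons_notMem {α : Type*} [DecidableEq α] {a : α} {l : List α}
    (h : a ∈ l) : ∃ p s, l = p ++ a :: s ∧ a ∉ s := by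
  obtain ⟨s', p', hs', hl, -⟩ := List.exists_erase_eq (List.mem_reverse.2 h)
  exact ⟨p'.reverse, s'.reverse, by simpa using congrArg List.reverse hl, by simpa using hs'⟩

lemma get1_cons_add_one (a : ℕ) (w : List ℕ) {j : ℕ} (hj : j ≠ 0) :
    get1 (a :: w) (j + 1) = get1 w j := by
  obtain ⟨j, rfl⟩ := Nat.exists_eq_add_one_of_ne_zero hj
  rfl

lemma Nat.Icc_one_eq_Ioc_zero (n : ℕ) : Finset.Icc 1 n = Finset.Ioc 0 n :=
  Finset.Icc_add_one_left_eq_Ioc 0 n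

lemma card_filter_Ioc_get1_cons (P : ℕ → Prop) [DecidablePred P] (a : ℕ) (w : List ℕ) (i : ℕ) :
    ((Finset.Ioc (i + 1) (w.length + 1)).filter fun j => P (get1 (a :: w) j)).card =
      ((Finset.Ioc i w.length).filter fun j => P (get1 w j)).card := by
  rw [← Finset.map_add_right_Ioc, Finset.filter_map, Finset.card_map]
  refine congrArg Finset.card (Finset.filter_congr fun j hj => ?_)
  simp only [Function.comp_apply, addRightEmbedding_apply,
    get1_cons_add_one a w (Finset.mem_Ioc.1 hj).1.ne_bot]

lemma countP_eq_card_filter_Icc_get1 (P : ℕ → Prop) [DecidablePred P] (w : List ℕ) :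
    w.countP (fun b => P b) = ((Finset.Icc 1 w.length).filter fun j => P (get1 w j)).card := by
  induction w with
  | nil => simp
  | cons a w ih =>
    have htail : ((Finset.Ioc 1 (w.length + 1)).filter fun j => P (get1 (a :: w) j)).card =
        w.countP (fun b => P b) := by
      rw [ih, Nat.Icc_one_eq_Ioc_zero]
      exact card_filter_Ioc_get1_cons P a w 0
    rw [List.length_cons, ← Finset.Ioc_insert_left (by omega), Finset.filter_insert,
      List.countP_cons, show get1 (a :: w) 1 = a from rfl]
    by_cases h : P a <;> simp [h, htail]

lemma dinv_cons (a : ℕ) (w : List ℕ) :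
    dinv (a :: w) = w.countP (fun b => b = a ∨ b + 1 = a) + dinv w := by
  have hhead : ((Finset.Ioc 1 (w.length + 1)).filter
      fun j => get1 (a :: w) j = a ∨ get1 (a :: w) j + 1 = a).card =
        w.countP (fun b => b = a ∨ b + 1 = a) := by
    rw [countP_eq_card_filter_Icc_get1, Nat.Icc_one_eq_Ioc_zero]
    exact card_filter_Ioc_get1_cons (fun b => b = a ∨ b + 1 = a) a w 0
  have hshift : Finset.Ioc 1 (w.length + 1) =
      (Finset.Icc 1 w.length).map (addRightEmbedding 1) := by
    rw [Nat.Icc_one_eq_Ioc_zero, Finset.map_add_right_Ioc]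
  rw [dinv, List.length_cons, ← Finset.Ioc_insert_left (by omega), Finset.sum_insert (by simp),
    show get1 (a :: w) 1 = a from rfl, hhead, hshift, Finset.sum_map, dinv]
  congr 1
  refine Finset.sum_congr rfl fun i hi => ?_
  rw [addRightEmbedding_apply, get1_cons_add_one a w (by simp at hi; omega)]
  exact card_filter_Ioc_get1_cons (fun b => b = get1 w i ∨ b + 1 = get1 w i) a w i

lemma dinv_append_cons (A B : List ℕ) (x : ℕ) :
    dinv (A ++ x :: B) = dinv (A ++ B) + A.countP (fun a => x = a ∨ x + 1 = a) +
      B.countP (fun b => b = x ∨ b + 1 = x) := by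
  induction A with
  | nil => simp [dinv_cons, add_comm]
  | cons a A ih =>
    simp only [List.cons_append, dinv_cons, ih, List.countP_append, List.countP_cons]
    ring

lemma dinv_append_cons_of_le {A B : List ℕ} {x : ℕ} (hle : ∀ b ∈ A ++ B, b ≤ x) (hB : x ∉ B) :
    dinv (A ++ x :: B) = dinv (A ++ B) + A.count x + B.count (x - 1) := by
  have hA : A.countP (fun a => x = a ∨ x + 1 = a) = A.count x := by
    refine (List.count_eq_countP ..).trans (List.countP_congr fun a ha => ?_) |>.symm
    have := hle a (List.mem_append_left B ha)
    simp only [decide_eq_true_eq, beq_iff_eq]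
    omega
  have hB' : B.countP (fun b => b = x ∨ b + 1 = x) = B.count (x - 1) := by
    refine (List.count_eq_countP ..).trans (List.countP_congr fun b hb => ?_) |>.symm
    have := hle b (List.mem_append_right A hb)
    have : b ≠ x := fun h => hB (h ▸ hb)
    simp only [decide_eq_true_eq, beq_iff_eq]
    omega
  rw [dinv_append_cons, hA, hB']

lemma isAreaSeq_iff_isChain (w : List ℕ) :
    IsAreaSeq w ↔ (∀ a ∈ w.head?, a = 0) ∧ w.IsChain (fun a b => b ≤ a + 1) := by
  have hget : ∀ i (h : i < w.length), get1 w (i + 1) = w[i] := fun i h => by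
    simp [get1, List.getD_eq_getElem?_getD, h]
  rw [IsAreaSeq, List.isChain_iff_getElem]
  refine and_congr ?_ ⟨fun h i hi => ?_, fun h i hi hlen => ?_⟩
  · cases w <;> simp [get1]
  · have := h (i + 1) (by omega) hi
    rwa [hget, hget] at this
  · obtain ⟨i, rfl⟩ := Nat.exists_eq_add_one_of_ne_zero (by omega : i ≠ 0)
    rw [hget, hget]
    exact h i hlen

/-- The largest letter that may follow `w` in an area sequence (a first letter must be `0`). -/
def maxNext (w : List ℕ) : ℕ := w.getLast?.elim 0 (· + 1)

lemma isAreaSeq_append_singleton {u : List ℕ} {a : ℕ} :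
    IsAreaSeq (u ++ [a]) ↔ IsAreaSeq u ∧ a ≤ maxNext u := by
  rcases eq_or_ne u [] with rfl | hu
  · simp [isAreaSeq_iff_isChain, maxNext]
  · simp [isAreaSeq_iff_isChain, List.head?_append_of_ne_nil _ hu, List.isChain_append,
      maxNext, List.getLast?_eq_some_getLast hu, and_assoc]

lemma isAreaSeq_append_cons {A B : List ℕ} {x : ℕ} :
    IsAreaSeq (A ++ x :: B) ↔
      IsAreaSeq A ∧ x ≤ maxNext A ∧ (x :: B).IsChain (fun a b => b ≤ a + 1) := by
  rw [← and_assoc, ← isAreaSeq_append_singleton, isAreaSeq_iff_isChain, isAreaSeq_iff_isChain,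
    List.isChain_split]
  cases A <;> simp [and_assoc]

lemma IsAreaSeq.append_cons {A B : List ℕ} {x : ℕ} (h : IsAreaSeq (A ++ B))
    (hx : x ≤ maxNext A) (hB : ∀ b ∈ B.head?, b ≤ x + 1) : IsAreaSeq (A ++ x :: B) := by
  rcases B with _ | ⟨b, B⟩
  · exact isAreaSeq_append_singleton.2 ⟨by simpa using h, hx⟩
  · obtain ⟨hA, -, hbB⟩ := isAreaSeq_append_cons.1 h
    exact isAreaSeq_append_cons.2 ⟨hA, hx, List.isChain_cons.2 ⟨hB, hbB⟩⟩

lemma IsAreaSeq.of_append_cons {A B : List ℕ} {x : ℕ} (h : IsAreaSeq (A ++ x :: B))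
    (hB : ∀ b ∈ B.head?, b ≤ x) : IsAreaSeq (A ++ B) := by
  obtain ⟨hA, hx, hxB⟩ := isAreaSeq_append_cons.1 h
  rcases B with _ | ⟨b, B⟩
  · simpa using hA
  · exact isAreaSeq_append_cons.2 ⟨hA, (hB b rfl).trans hx, (List.isChain_cons.1 hxB).2⟩

lemma le_maxVal {w : List ℕ} {b : ℕ} (hb : b ∈ w) : b ≤ maxVal w :=
  List.le_max_of_le hb le_rfl

lemma maxVal_mem {w : List ℕ} (hw : w ≠ []) : maxVal w ∈ w :=
  List.maximum_mem (List.foldr_max_of_ne_nil hw).symm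

lemma forall_mem_append_cons_le {p s : List ℕ} {x : ℕ} (hle : ∀ b ∈ p ++ s, b ≤ x) :
    ∀ b ∈ p ++ x :: s, b ≤ x := by
  intro b hb
  rcases List.mem_append.1 hb with hb | hb
  · exact hle b (List.mem_append_left s hb)
  · rcases List.mem_cons.1 hb with rfl | hb
    · exact le_rfl
    · exact hle b (List.mem_append_right p hb)

lemma maxVal_append_cons {p s : List ℕ} {x : ℕ} (hle : ∀ b ∈ p ++ s, b ≤ x) :
    maxVal (p ++ x :: s) = x :=
  le_antisymm (List.max_le_of_forall_le _ x (forall_mem_append_cons_le hle))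
    (le_maxVal (by simp))

lemma exists_lastMax_split {w : List ℕ} (hw : w ≠ []) :
    ∃ p s x, w = p ++ x :: s ∧ x ∉ s ∧ ∀ b ∈ p ++ s, b ≤ x := by
  obtain ⟨p, s, hsplit, hs⟩ := List.exists_eq_append_cons_notMem (maxVal_mem hw)
  refine ⟨p, s, maxVal w, hsplit, hs, fun b hb => le_maxVal ?_⟩
  rw [hsplit]
  simp only [List.mem_append, List.mem_cons] at hb ⊢
  tauto

def eraseLastMax (w : List ℕ) : List ℕ := (w.reverse.erase (maxVal w)).reverse

lemma eraseLastMax_append_cons {p s : List ℕ} {x : ℕ} (hle : ∀ b ∈ p ++ s, b ≤ x)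
    (hs : x ∉ s) : eraseLastMax (p ++ x :: s) = p ++ s := by
  rw [eraseLastMax, maxVal_append_cons hle, List.reverse_append, List.reverse_cons,
    List.append_assoc, List.erase_append_right _ (by simpa using hs), List.singleton_append,
    List.erase_cons_head, List.reverse_append, List.reverse_reverse, List.reverse_reverse]

lemma rtakeWhile_append_cons {p s : List ℕ} {x : ℕ} (hs : x ∉ s) :
    (p ++ x :: s).rtakeWhile (· != x) = s := by
  have hs' : ∀ b ∈ s.reverse, (b != x) = true := fun b hb => by
    rw [bne_iff_ne]
    rintro rfl
    exact hs (List.mem_reverse.1 hb)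
  simp [List.rtakeWhile, List.takeWhile_append_of_pos hs']

lemma rdropWhile_append_cons {p s : List ℕ} {x : ℕ} (hs : x ∉ s) :
    (p ++ x :: s).rdropWhile (· != x) = p ++ [x] := by
  have := List.rdropWhile_append_rtakeWhile (p := (· != x)) (l := p ++ x :: s)
  rw [rtakeWhile_append_cons hs] at this
  exact List.append_cancel_right (this.trans (by simp))

/-- The dinv gained by inserting a copy of the largest letter `m` of `w` right after its last
occurrence; the `m - 1` is harmless at `m = 0`, where nothing follows the last `m`. -/
def dinvCap (w : List ℕ) : ℕ :=
  w.count (maxVal w) + (w.rtakeWhile (· != maxVal w)).count (maxVal w - 1)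

lemma dinvCap_append_cons {p s : List ℕ} {x : ℕ} (hle : ∀ b ∈ p ++ s, b ≤ x) (hs : x ∉ s) :
    dinvCap (p ++ x :: s) = (p ++ x :: s).count x + s.count (x - 1) := by
  rw [dinvCap, maxVal_append_cons hle, rtakeWhile_append_cons hs]

lemma dinv_append_cons_add_one {p s : List ℕ} {x : ℕ} (hle : ∀ b ∈ p ++ s, b ≤ x)
    (hs : x ∉ s) : dinv (p ++ x :: s) + 1 = dinv (p ++ s) + dinvCap (p ++ x :: s) := by
  rw [dinv_append_cons_of_le hle hs, dinvCap_append_cons hle hs, List.count_append,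
    List.count_cons_self, List.count_eq_zero_of_not_mem hs]
  ring

def splitsAfter (y : ℕ) : List ℕ → Multiset (List ℕ × List ℕ)
  | [] => 0
  | a :: l => (if a = y then {([a], l)} else 0) + (splitsAfter y l).map fun z => (a :: z.1, z.2)

lemma mem_splitsAfter {y : ℕ} {l A B : List ℕ} :
    (A, B) ∈ splitsAfter y l ↔ A ++ B = l ∧ A.getLast? = some y := by
  induction l generalizing A B with
  | nil => cases A <;> simp [splitsAfter]
  | cons a l ih =>
    simp only [splitsAfter, Multiset.mem_add, Multiset.mem_map, Prod.exists, ih]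
    rcases A with _ | ⟨c, _ | ⟨d, A⟩⟩ <;> split_ifs <;> aesop

lemma map_count_splitsAfter (y : ℕ) (l : List ℕ) :
    (splitsAfter y l).map (fun z => z.2.count y) = Multiset.range (l.count y) := by
  induction l with
  | nil => rfl
  | cons a l ih =>
    rw [splitsAfter, Multiset.map_add, Multiset.map_map]
    simp only [Function.comp_def, ih]
    by_cases h : a = y
    · subst h
      simp [Multiset.range_succ]
    · simp [h]

/-- The sequences obtained from `u` by inserting a new largest letter: `m + 1` right after an
occurrence of `m = maxVal u`, or `m` right after the last `m` or after an `m - 1` that follows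
it. For an area sequence `u` these are exactly the area sequences `v` with `eraseLastMax v = u`,
and their dinv exceeds that of `u` by `0, 1, …, dinvCap u`, each value occurring once. -/
def dinvChildren (u : List ℕ) : Multiset (List ℕ) :=
  (splitsAfter (maxVal u) u).map (fun z => z.1 ++ (maxVal u + 1) :: z.2) +
    (([], u.rtakeWhile (· != maxVal u)) ::ₘ
        splitsAfter (maxVal u - 1) (u.rtakeWhile (· != maxVal u))).map
      fun z => u.rdropWhile (· != maxVal u) ++ z.1 ++ maxVal u :: z.2

lemma dinvChildren_nil : dinvChildren [] = {[0]} := rfl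

lemma dinvChildren_append_cons {p s : List ℕ} {x : ℕ} (hle : ∀ b ∈ p ++ s, b ≤ x)
    (hs : x ∉ s) :
    dinvChildren (p ++ x :: s) =
      (splitsAfter x (p ++ x :: s)).map (fun z => z.1 ++ (x + 1) :: z.2) +
        (([], s) ::ₘ splitsAfter (x - 1) s).map fun z => p ++ x :: (z.1 ++ x :: z.2) := by
  simp [dinvChildren, maxVal_append_cons hle, rtakeWhile_append_cons hs,
    rdropWhile_append_cons hs]

lemma mem_dinvChildren_of_mem_splitsAfter {u A B : List ℕ}
    (h : (A, B) ∈ splitsAfter (maxVal u) u) : A ++ (maxVal u + 1) :: B ∈ dinvChildren u :=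
  Multiset.mem_add.2 (Or.inl (Multiset.mem_map.2 ⟨(A, B), h, rfl⟩))

lemma exists_eq_append_cons_of_mem_dinvChildren {u v : List ℕ} (hv : v ∈ dinvChildren u) :
    ∃ A B x, v = A ++ x :: B ∧ A ++ B = u ∧ x ∉ B ∧ (∀ b ∈ A ++ B, b ≤ x) ∧
      x ≤ maxNext A := by
  rcases eq_or_ne u [] with rfl | hu
  · rw [dinvChildren_nil, Multiset.mem_singleton] at hv
    exact ⟨[], [], 0, hv, rfl, by simp, by simp, le_rfl⟩
  obtain ⟨p, s, x, rfl, hs, hle⟩ := exists_lastMax_split hu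
  have hle' := forall_mem_append_cons_le hle
  rw [dinvChildren_append_cons hle hs] at hv
  rcases Multiset.mem_add.1 hv with hv | hv
  · obtain ⟨⟨A, B⟩, hAB, rfl⟩ := Multiset.mem_map.1 hv
    obtain ⟨hAB, hlast⟩ := mem_splitsAfter.1 hAB
    have hB : ∀ b ∈ B, b ≤ x := fun b hb => hle' b (hAB ▸ List.mem_append_right A hb)
    refine ⟨A, B, x + 1, rfl, hAB, fun h => by simpa using hB _ h,
      fun b hb => (hle' b (hAB ▸ hb)).trans (Nat.le_succ x), by simp [maxNext, hlast]⟩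
  · obtain ⟨⟨C, D⟩, hCD, rfl⟩ := Multiset.mem_map.1 hv
    have hCD' : C ++ D = s ∧ (C = [] ∨ C.getLast? = some (x - 1)) := by
      rcases Multiset.mem_cons.1 hCD with h | h
      · simp_all
      · exact ⟨(mem_splitsAfter.1 h).1, Or.inr (mem_splitsAfter.1 h).2⟩
    obtain ⟨rfl, hC⟩ := hCD'
    refine ⟨p ++ x :: C, D, x, by simp, by simp, fun h => hs (by simp [h]),
      fun b hb => hle' b (by simpa using hb), ?_⟩
    rcases hC with rfl | hC
    · simp [maxNext]
    · simp [maxNext, List.getLast?_cons, hC]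
      omega

lemma eraseLastMax_of_mem_dinvChildren {u v : List ℕ} (hv : v ∈ dinvChildren u) :
    eraseLastMax v = u := by
  obtain ⟨A, B, x, rfl, rfl, hB, hle, -⟩ := exists_eq_append_cons_of_mem_dinvChildren hv
  exact eraseLastMax_append_cons hle hB

lemma length_of_mem_dinvChildren {u v : List ℕ} (hv : v ∈ dinvChildren u) :
    v.length = u.length + 1 := by
  obtain ⟨A, B, x, rfl, rfl, -⟩ := exists_eq_append_cons_of_mem_dinvChildren hv
  simp [add_assoc]

lemma IsAreaSeq.of_mem_dinvChildren {u v : List ℕ} (hu : IsAreaSeq u)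
    (hv : v ∈ dinvChildren u) : IsAreaSeq v := by
  obtain ⟨A, B, x, rfl, rfl, -, hle, hx⟩ := exists_eq_append_cons_of_mem_dinvChildren hv
  exact hu.append_cons hx fun b hb =>
    (hle b (List.mem_append_right A (List.mem_of_mem_head? hb))).trans (Nat.le_succ x)

lemma dinv_add_one_of_mem_dinvChildren {u v : List ℕ} (hv : v ∈ dinvChildren u) :
    dinv v + 1 = dinv u + dinvCap v := by
  obtain ⟨A, B, x, rfl, rfl, hB, hle, -⟩ := exists_eq_append_cons_of_mem_dinvChildren hv
  exact dinv_append_cons_add_one hle hB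

lemma map_dinvCap_insert_succ_max {u : List ℕ} {x : ℕ} (hle : ∀ b ∈ u, b ≤ x) :
    (splitsAfter x u).map (fun z => dinvCap (z.1 ++ (x + 1) :: z.2)) =
      (Multiset.range (u.count x)).map (· + 1) := by
  rw [← map_count_splitsAfter, Multiset.map_map]
  refine Multiset.map_congr rfl fun ⟨A, B⟩ hz => ?_
  obtain ⟨rfl, -⟩ := mem_splitsAfter.1 hz
  have hx1 : x + 1 ∉ A ++ B := fun h => by have := hle _ h; omega
  rw [dinvCap_append_cons (fun b hb => (hle b hb).trans (Nat.le_succ x))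
      (fun h => hx1 (List.mem_append_right A h)), List.count_append, List.count_cons_self,
    List.count_eq_zero_of_not_mem (fun h => hx1 (List.mem_append_left B h)),
    List.count_eq_zero_of_not_mem (fun h => hx1 (List.mem_append_right A h))]
  simp [add_comm]

lemma map_dinvCap_insert_max {p s : List ℕ} {x : ℕ} (hle : ∀ b ∈ p ++ s, b ≤ x) (hs : x ∉ s) :
    (([], s) ::ₘ splitsAfter (x - 1) s).map (fun z => dinvCap (p ++ x :: (z.1 ++ x :: z.2))) =
      (Multiset.range (s.count (x - 1) + 1)).map fun k => (p ++ x :: s).count x + k + 1 := by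
  have key : ∀ C D, C ++ D = s →
      dinvCap (p ++ x :: (C ++ x :: D)) = (p ++ x :: s).count x + D.count (x - 1) + 1 := by
    rintro C D rfl
    rw [show p ++ x :: (C ++ x :: D) = (p ++ x :: C) ++ x :: D by simp,
      dinvCap_append_cons (fun b hb => forall_mem_append_cons_le hle b (by simpa using hb))
        (fun h => hs (by simp [h]))]
    simp
    omega
  rw [Multiset.range_succ, ← map_count_splitsAfter, Multiset.map_cons, Multiset.map_cons,
    Multiset.map_map, key [] s rfl]
  congr 1
  exact Multiset.map_congr rfl fun ⟨C, D⟩ hz => key C D (mem_splitsAfter.1 hz).1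

lemma map_dinvCap_dinvChildren (u : List ℕ) :
    (dinvChildren u).map dinvCap = (Multiset.range (dinvCap u + 1)).map (· + 1) := by
  rcases eq_or_ne u [] with rfl | hu
  · rfl
  obtain ⟨p, s, x, rfl, hs, hle⟩ := exists_lastMax_split hu
  rw [dinvChildren_append_cons hle hs, Multiset.map_add, Multiset.map_map, Multiset.map_map]
  simp only [Function.comp_def]
  rw [map_dinvCap_insert_succ_max (forall_mem_append_cons_le hle), map_dinvCap_insert_max hle hs,
    dinvCap_append_cons hle hs, add_assoc, Multiset.range_add ((p ++ x :: s).count x),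
    Multiset.map_add, Multiset.map_map]
  rfl

lemma IsAreaSeq.eraseLastMax {v : List ℕ} (hv : IsAreaSeq v) : IsAreaSeq (eraseLastMax v) := by
  rcases eq_or_ne v [] with rfl | hne
  · exact hv
  obtain ⟨p, s, x, rfl, hs, hle⟩ := exists_lastMax_split hne
  rw [eraseLastMax_append_cons hle hs]
  exact hv.of_append_cons fun b hb =>
    hle b (List.mem_append_right p (List.mem_of_mem_head? hb))

lemma append_cons_mem_dinvChildren_of_mem {p s : List ℕ} {x : ℕ} (hle : ∀ b ∈ p ++ s, b ≤ x)
    (hs : x ∉ s) (hxp : x ∈ p) (hx : x ≤ maxNext p) : p ++ x :: s ∈ dinvChildren (p ++ s) := by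
  obtain ⟨p₀, p₁, rfl, hp₁⟩ := List.exists_eq_append_cons_notMem hxp
  have hle₀ : ∀ b ∈ p₀ ++ (p₁ ++ s), b ≤ x := fun b hb => hle b <| by
    simp only [List.mem_append, List.mem_cons] at hb ⊢
    tauto
  have hs₀ : x ∉ p₁ ++ s := by simp [hp₁, hs]
  simp only [List.append_assoc, List.cons_append]
  rw [dinvChildren_append_cons hle₀ hs₀]
  refine Multiset.mem_add.2 (Or.inr (Multiset.mem_map.2 ⟨(p₁, s), ?_, rfl⟩))
  rcases p₁.eq_nil_or_concat' with rfl | ⟨p₁, z, rfl⟩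
  · exact Multiset.mem_cons_self _ _
  · have hzx : z ≠ x := fun h => hp₁ (by simp [h])
    have hzle : z ≤ x := hle z (by simp)
    have hxz : x ≤ z + 1 := by
      rwa [show p₀ ++ x :: (p₁ ++ [z]) = (p₀ ++ x :: p₁) ++ [z] by simp, maxNext,
        List.getLast?_concat] at hx
    exact Multiset.mem_cons_of_mem (mem_splitsAfter.2 ⟨rfl, by simp; omega⟩)

lemma append_cons_mem_dinvChildren_of_notMem {p s : List ℕ} {x : ℕ}
    (hle : ∀ b ∈ p ++ s, b ≤ x) (hs : x ∉ s) (hxp : x ∉ p) (hx : x ≤ maxNext p) :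
    p ++ x :: s ∈ dinvChildren (p ++ s) := by
  rcases p.eq_nil_or_concat' with rfl | ⟨p, y, rfl⟩
  · obtain rfl : x = 0 := by simpa [maxNext] using hx
    obtain rfl : s = [] := List.eq_nil_iff_forall_not_mem.2 fun b hb => hs <| by
      obtain rfl : b = 0 := Nat.le_zero.1 (hle b (by simpa using hb))
      exact hb
    exact Multiset.mem_singleton.2 rfl
  have hxy : x = y + 1 := by
    have : y ≠ x := fun h => hxp (by simp [h])
    have : y ≤ x := hle y (by simp)
    have : x ≤ y + 1 := by simpa [maxNext] using hx
    omega
  have hmax : maxVal (p ++ [y] ++ s) = y := by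
    rw [List.append_assoc, List.singleton_append]
    refine maxVal_append_cons fun b hb => ?_
    have hbx : b ≠ x := by
      rintro rfl
      simp only [List.mem_append] at hb
      exact hb.elim (fun h => hxp (List.mem_append_left _ h)) hs
    have := hle b (by simp only [List.mem_append] at hb ⊢; tauto)
    omega
  have := mem_dinvChildren_of_mem_splitsAfter (u := p ++ [y] ++ s) (A := p ++ [y]) (B := s)
    (mem_splitsAfter.2 ⟨rfl, by rw [hmax]; simp⟩)
  rwa [hmax, ← hxy] at this

lemma mem_dinvChildren_eraseLastMax {v : List ℕ} (hv : IsAreaSeq v) (hne : v ≠ []) :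
    v ∈ dinvChildren (eraseLastMax v) := by
  obtain ⟨p, s, x, rfl, hs, hle⟩ := exists_lastMax_split hne
  obtain ⟨-, hx, -⟩ := isAreaSeq_append_cons.1 hv
  rw [eraseLastMax_append_cons hle hs]
  by_cases hxp : x ∈ p
  · exact append_cons_mem_dinvChildren_of_mem hle hs hxp hx
  · exact append_cons_mem_dinvChildren_of_notMem hle hs hxp hx

def areaChildren (u : List ℕ) : Multiset (List ℕ) :=
  (Multiset.range (maxNext u + 1)).map (u ++ [·])

def areaSeqs : ℕ → Finset (List ℕ)
  | 0 => {[]}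
  | n + 1 => (areaSeqs n).biUnion fun u => (areaChildren u).toFinset

lemma mem_areaSeqs {n : ℕ} {w : List ℕ} : w ∈ areaSeqs n ↔ IsAreaSeq w ∧ w.length = n := by
  induction n generalizing w with
  | zero =>
    simp only [areaSeqs, Finset.mem_singleton, List.length_eq_zero_iff, iff_and_self]
    rintro rfl
    simp [isAreaSeq_iff_isChain]
  | succ n ih =>
    simp only [areaSeqs, Finset.mem_biUnion, Multiset.mem_toFinset, areaChildren,
      Multiset.mem_map, Multiset.mem_range, ih]
    constructor
    · rintro ⟨u, ⟨hu, rfl⟩, a, ha, rfl⟩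
      exact ⟨isAreaSeq_append_singleton.2 ⟨hu, by omega⟩, by simp⟩
    · rintro ⟨hw, hlen⟩
      have hne : w ≠ [] := by rintro rfl; simp at hlen
      rw [← List.dropLast_append_getLast hne] at hw hlen ⊢
      obtain ⟨hu, ha⟩ := isAreaSeq_append_singleton.1 hw
      exact ⟨_, ⟨hu, by simpa using hlen⟩, _, by omega, rfl⟩

lemma map_area_labels_areaSeqs_succ (n : ℕ) :
    (areaSeqs (n + 1)).val.map (fun v => (area v, maxNext v)) =
      ((areaSeqs n).val.map fun u => (area u, maxNext u)).bind childLabels := by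
  refine Finset.map_val_eq_bind_childLabels areaChildren List.dropLast area maxNext ?_ ?_ ?_ ?_
  · intro u _ v hv
    obtain ⟨a, -, rfl⟩ := Multiset.mem_map.1 hv
    exact List.dropLast_concat
  · simp [areaSeqs]
  · intro u _
    rw [areaChildren, Multiset.map_map]
    exact Multiset.map_congr rfl fun a _ => by simp [maxNext]
  · intro u _ v hv
    obtain ⟨a, -, rfl⟩ := Multiset.mem_map.1 hv
    simp [area, maxNext, add_assoc]

lemma map_dinv_labels_areaSeqs_succ (n : ℕ) :
    (areaSeqs (n + 1)).val.map (fun v => (dinv v, dinvCap v)) =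
      ((areaSeqs n).val.map fun u => (dinv u, dinvCap u)).bind childLabels := by
  refine Finset.map_val_eq_bind_childLabels dinvChildren eraseLastMax dinv dinvCap
    (fun u _ v hv => eraseLastMax_of_mem_dinvChildren hv) (fun v => ?_)
    (fun u _ => map_dinvCap_dinvChildren u) (fun u _ v hv => dinv_add_one_of_mem_dinvChildren hv)
  simp only [mem_areaSeqs]
  constructor
  · rintro ⟨hv, hlen⟩
    have hchild := mem_dinvChildren_eraseLastMax hv (by rintro rfl; simp at hlen)
    have := length_of_mem_dinvChildren hchild
    exact ⟨eraseLastMax v, ⟨hv.eraseLastMax, by omega⟩, hchild⟩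
  · rintro ⟨u, ⟨hu, rfl⟩, hv⟩
    exact ⟨hu.of_mem_dinvChildren hv, length_of_mem_dinvChildren hv⟩

lemma map_dinv_labels_areaSeqs_eq (n : ℕ) :
    (areaSeqs n).val.map (fun w => (dinv w, dinvCap w)) =
      (areaSeqs n).val.map (fun w => (area w, maxNext w)) := by
  induction n with
  | zero => rfl
  | succ n ih => rw [map_dinv_labels_areaSeqs_succ, map_area_labels_areaSeqs_succ, ih]

lemma natCard_eq_count_map_areaSeqs (f : List ℕ → ℕ) (n q : ℕ) :
    Nat.card {w : List ℕ // IsAreaSeq w ∧ w.length = n ∧ f w = q} =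
      ((areaSeqs n).val.map f).count q := by
  rw [Multiset.count_map, ← Finset.filter_val, Finset.card_val, ← Nat.card_eq_finsetCard]
  exact Nat.card_congr (Equiv.subtypeEquivRight fun w => by simp [mem_areaSeqs, and_assoc, eq_comm])

/-- The number of area sequences of size `n` with area `q` equals the number of
area sequences of size `n` with dinv `q`. -/
theorem card_area_eq_card_dinv (n q : ℕ) :
    Nat.card {w : List ℕ // IsAreaSeq w ∧ w.length = n ∧ area w = q} =
      Nat.card {w : List ℕ // IsAreaSeq w ∧ w.length = n ∧ dinv w = q} := by
  have h := congrArg (Multiset.map Prod.fst) (map_dinv_labels_areaSeqs_eq n)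
  simp only [Multiset.map_map, Function.comp_def] at h
  rw [natCard_eq_count_map_areaSeqs, natCard_eq_count_map_areaSeqs, h]
end
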